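/- Let (X,ρ) be a metric space, let P be an abstract porosity on X, and let M be a σ-discrete system of σ-P-porous subsets of X. Then the union ⋃M is σ-P-porous. -/
import Mathlib


open Metric Filter Set

/-- An abstract porosity on a metric space `X`: a relation between points and subsets
of `X` satisfying the axioms (A1), (A2), (A3). -/
structure AbstractPorosity (X : Type*) [MetricSpace X] where
  rel : X → Set X → Prop
  mono : ∀ (x : X) (A B : Set X), A ⊆ B → rel x B → rel x A
  loc : ∀ (x : X) (A : Set X), rel x A ↔ ∃ r > 0, rel x (A ∩ Metric.ball x r)
  clos : ∀ (x : X) (A : Set X), rel x A ↔ rel x (closure A)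

variable {X : Type*} [MetricSpace X]

/-- `A` is `P`-porous if `P(x,A)` holds at each point `x ∈ A`. -/
def AbstractPorosity.Porous (P : AbstractPorosity X) (A : Set X) : Prop :=
  ∀ x ∈ A, P.rel x A

/-- `A` is σ-`P`-porous if it is a countable union of `P`-porous sets. -/
def AbstractPorosity.SigmaPorous (P : AbstractPorosity X) (A : Set X) : Prop :=
  ∃ f : ℕ → Set X, (∀ n, P.Porous (f n)) ∧ A = ⋃ n, f n

/-- `A` is σ-`P`-porous at `x` if some `A ∩ B(x,r)` (r>0) is σ-`P`-porous. -/
def AbstractPorosity.SigmaPorousAt (P : AbstractPorosity X) (A : Set X) (x : X) : Prop :=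
  ∃ r > 0, P.SigmaPorous (A ∩ Metric.ball x r)

/-- The kernel `K_P(A)`: points of `A` at which `A` is not σ-`P`-porous. -/
def AbstractPorosity.kernel (P : AbstractPorosity X) (A : Set X) : Set X :=
  {x ∈ A | ¬ P.SigmaPorousAt A x}

/-- A system of sets is discrete if every point has a ball around it meeting
at most one element of the system. -/
def DiscreteSystem {X : Type*} [MetricSpace X] (M : Set (Set X)) : Prop :=
  ∀ x : X, ∃ r > 0, ∀ A ∈ M, ∀ B ∈ M,
    (Metric.ball x r ∩ A).Nonempty → (Metric.ball x r ∩ B).Nonempty → A = B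

/-- A system is σ-discrete if it is a countable union of discrete systems. -/
def SigmaDiscreteSystem {X : Type*} [MetricSpace X] (M : Set (Set X)) : Prop :=
  ∃ f : ℕ → Set (Set X), (∀ n, DiscreteSystem (f n)) ∧ M = ⋃ n, f n

lemma sigmaPorous_iUnion_aux {X : Type*} [MetricSpace X] (P : AbstractPorosity X)
    (g : ℕ → Set X) (h : ∀ n, P.SigmaPorous (g n)) : P.SigmaPorous (⋃ n, g n) := by
  choose f hf hfu using h
  refine ⟨fun k => f (Nat.unpair k).1 (Nat.unpair k).2, fun k => hf _ _, ?_⟩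
  ext x
  simp only [mem_iUnion]
  constructor
  · rintro ⟨n, hx⟩
    rw [hfu n] at hx
    simp only [mem_iUnion] at hx
    obtain ⟨m, hm⟩ := hx
    exact ⟨Nat.pair n m, by simpa [Nat.unpair_pair] using hm⟩
  · rintro ⟨k, hk⟩
    exact ⟨(Nat.unpair k).1, by rw [hfu]; exact mem_iUnion.2 ⟨_, hk⟩⟩

lemma sigmaPorous_sUnion_of_discreteSystem {X : Type*} [MetricSpace X]
    (P : AbstractPorosity X) (M : Set (Set X)) (hdisc : DiscreteSystem M)
    (hpor : ∀ A ∈ M, P.SigmaPorous A) :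
    P.SigmaPorous (⋃₀ M) := by
  choose f hf hfu using fun A : M => hpor A A.2
  refine ⟨fun n => ⋃ A : M, f A n, ?_, ?_⟩
  · intro n x hx
    obtain ⟨A, hxA⟩ := mem_iUnion.1 hx
    obtain ⟨r, hr, hball⟩ := hdisc x
    have hsubA : f A n ⊆ (A : Set X) := by
      rw [hfu A]; exact subset_iUnion _ n
    have hsub : (⋃ B : M, f B n) ∩ Metric.ball x r ⊆ f A n := by
      rintro y ⟨hy, hyb⟩
      obtain ⟨B, hyB⟩ := mem_iUnion.1 hy
      have hBsub : f B n ⊆ (B : Set X) := by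
        rw [hfu B]; exact subset_iUnion _ n
      have : (B : Set X) = (A : Set X) :=
        hball B B.2 A A.2 ⟨y, hyb, hBsub hyB⟩ ⟨x, Metric.mem_ball_self hr, hsubA hxA⟩
      have hBA : B = A := Subtype.ext this
      rwa [hBA] at hyB
    exact (P.loc x _).2 ⟨r, hr, P.mono x _ _ hsub (hf A n x hxA)⟩
  · ext x
    simp only [mem_sUnion, mem_iUnion]
    constructor
    · rintro ⟨A, hA, hx⟩
      have : x ∈ ⋃ n, f ⟨A, hA⟩ n := by rw [← hfu ⟨A, hA⟩]; exact hx
      obtain ⟨n, hn⟩ := mem_iUnion.1 this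
      exact ⟨n, ⟨A, hA⟩, hn⟩
    · rintro ⟨n, A, hx⟩
      refine ⟨A, A.2, ?_⟩
      have : f A n ⊆ (A : Set X) := by rw [hfu A]; exact subset_iUnion _ n
      exact this hx

/-- The union of a σ-discrete system of σ-`P`-porous sets is σ-`P`-porous. -/
theorem sigmaPorous_sUnion_of_sigmaDiscreteSystem {X : Type*} [MetricSpace X]
    (P : AbstractPorosity X) (M : Set (Set X)) (hdisc : SigmaDiscreteSystem M)
    (hpor : ∀ A ∈ M, P.SigmaPorous A) :
    P.SigmaPorous (⋃₀ M) := by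
  obtain ⟨g, hg, rfl⟩ := hdisc
  rw [Set.sUnion_iUnion]
  exact sigmaPorous_iUnion_aux P _ fun n =>
    sigmaPorous_sUnion_of_discreteSystem P (g n) (hg n)
      (fun A hA => hpor A (mem_iUnion.2 ⟨n, hA⟩))
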